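/- Let X be either K^ℕ with the Tychonoff product topology or c₀(ℕ,K) with its norm topology, and let T be a compact subset of X. Then there exists a homeomorphism η of X onto X such that π₁(η(T)) is a single point of K, where π₁ : X → K is the projection onto the first coordinate. -/

import Mathlib

/-!
Shear twice. The first shear `x ↦ x + x₀ Λ`, with `Λ = (0, λ₁, λ₂, …)`, is chosen so that
`x_j / λ_j → 0` at a uniform rate on `T`; for `c₀` one also needs `λ_j → 0`, which is possible
because a compact subset of `c₀` has uniformly small tails. After it, `y_j / λ_j → x₀` for
`y = x + x₀ Λ`, `x ∈ T`. Since closed balls of `K` are clopen, there is a continuous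
`G : K^ℕ → K` sending every sequence that converges to `w` at the given rate to `w`. Then
`g y = G (y_j / λ_j)_{j ≥ 1}` does not depend on `y₀`, so the second shear `y ↦ y - g y • e₀` is
a homeomorphism, and it sends the image of `T` into `{y₀ = 0}`.
-/

open Filter Topology Metric Set
open scoped ZeroAtInfty

section TruncSeq

variable {E : Type*} [NormedAddCommGroup E] {ε : ℕ → ℝ}

/-- Follows `z`, except that a step longer than `ε j` is refused: the sequence then keeps its
current value. Each term depends continuously on `z` because closed balls are clopen. -/
noncomputable def truncSeq (ε : ℕ → ℝ) (z : ℕ → E) : ℕ → E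
  | 0 => z 0
  | j + 1 => if ‖z (j + 1) - truncSeq ε z j‖ ≤ ε j then z (j + 1) else truncSeq ε z j

theorem truncSeq_succ (ε : ℕ → ℝ) (z : ℕ → E) (j : ℕ) :
    truncSeq ε z (j + 1) =
      if ‖z (j + 1) - truncSeq ε z j‖ ≤ ε j then z (j + 1) else truncSeq ε z j :=
  rfl

theorem norm_truncSeq_succ_sub_le (z : ℕ → E) {j : ℕ} (hε : 0 ≤ ε j) :
    ‖truncSeq ε z (j + 1) - truncSeq ε z j‖ ≤ ε j := by
  rw [truncSeq_succ]
  split_ifs with h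
  · exact h
  · simpa using hε

theorem truncSeq_eq_self {z : ℕ → E} (h : ∀ j, ‖z (j + 1) - z j‖ ≤ ε j) : truncSeq ε z = z := by
  funext j
  induction j with
  | zero => rfl
  | succ j ih => rw [truncSeq_succ, ih, if_pos (h j)]

variable [IsUltrametricDist E]

theorem continuous_truncSeq (hε : ∀ j, 0 < ε j) :
    ∀ j, Continuous fun z : ℕ → E => truncSeq ε z j
  | 0 => continuous_apply 0
  | j + 1 => by
    have hstep : Continuous fun z : ℕ → E => z (j + 1) - truncSeq ε z j :=
      (continuous_apply _).sub (continuous_truncSeq hε j)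
    have hclopen := (IsUltrametricDist.isClopen_closedBall (0 : E) (hε j).ne').preimage hstep
    simp only [preimage, mem_closedBall_zero_iff] at hclopen
    exact Continuous.if (by simp [hclopen.frontier_eq]) (continuous_apply _)
      (continuous_truncSeq hε j)

theorem norm_truncSeq_sub_le (hε : ∀ j, 0 ≤ ε j) (z : ℕ → E) {j : ℕ} {γ : ℝ} (hγ : 0 ≤ γ)
    (hεγ : ∀ i ≥ j, ε i ≤ γ) {m : ℕ} (hjm : j ≤ m) :
    ‖truncSeq ε z m - truncSeq ε z j‖ ≤ γ := by
  induction m, hjm using Nat.le_induction with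
  | base => simpa using hγ
  | succ m hjm ih =>
    rw [← sub_add_sub_cancel _ (truncSeq ε z m)]
    exact (IsUltrametricDist.norm_add_le_max _ _).trans
      (max_le ((norm_truncSeq_succ_sub_le z (hε m)).trans (hεγ m hjm)) ih)

theorem uniformCauchySeqOn_truncSeq (hε : ∀ j, 0 ≤ ε j) (hε0 : Tendsto ε atTop (𝓝 0)) :
    UniformCauchySeqOn (fun j (z : ℕ → E) => truncSeq ε z j) atTop univ := by
  rw [Metric.uniformCauchySeqOn_iff]
  intro γ hγ
  obtain ⟨N, hN⟩ := eventually_atTop.1 (hε0.eventually (ge_mem_nhds (half_pos hγ)))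
  have htail : ∀ z : ℕ → E, ∀ m ≥ N, dist (truncSeq ε z m) (truncSeq ε z N) ≤ γ / 2 :=
    fun z m hm => by
      rw [dist_eq_norm]
      exact norm_truncSeq_sub_le hε z (half_pos hγ).le hN hm
  refine ⟨N, fun m hm n hn z _ => ?_⟩
  calc dist (truncSeq ε z m) (truncSeq ε z n)
      ≤ max (dist (truncSeq ε z m) (truncSeq ε z N)) (dist (truncSeq ε z N) (truncSeq ε z n)) :=
        dist_triangle_max _ _ _
    _ ≤ γ / 2 := max_le (htail z m hm) (dist_comm (truncSeq ε z n) _ ▸ htail z n hn)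
    _ < γ := half_lt_self hγ

theorem exists_continuous_eq_of_forall_norm_sub_le [CompleteSpace E] (hε : ∀ j, 0 < ε j)
    (hε0 : Tendsto ε atTop (𝓝 0)) :
    ∃ G : (ℕ → E) → E, Continuous G ∧ ∀ z w, (∀ j, ‖z j - w‖ ≤ ε j) → G z = w := by
  set ε' : ℕ → ℝ := fun j => max (ε j) (ε (j + 1))
  have hε' : ∀ j, 0 < ε' j := fun j => lt_max_of_lt_left (hε j)
  have hε'0 : Tendsto ε' atTop (𝓝 0) := by
    simpa using hε0.max (hε0.comp (tendsto_add_atTop_nat 1))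
  have hcauchy := uniformCauchySeqOn_truncSeq (E := E) (fun j => (hε' j).le) hε'0
  choose G hG using fun z => cauchySeq_tendsto_of_complete (hcauchy.cauchySeq (mem_univ z))
  refine ⟨G, ?_, fun z w hzw => ?_⟩
  · exact (tendstoUniformlyOn_univ.1 (hcauchy.tendstoUniformlyOn_of_tendsto fun z _ => hG z)
      ).continuous (Frequently.of_forall (continuous_truncSeq hε'))
  · have hsteps : ∀ j, ‖z (j + 1) - z j‖ ≤ ε' j := fun j => by
      rw [← dist_eq_norm]
      refine (dist_triangle_max _ w _).trans (max_le ?_ ?_)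
      · exact (dist_eq_norm _ w ▸ hzw (j + 1)).trans (le_max_right _ _)
      · exact (dist_eq_norm' w _ ▸ hzw j).trans (le_max_left _ _)
    have hzw' : Tendsto z atTop (𝓝 w) :=
      tendsto_iff_norm_sub_tendsto_zero.2 (squeeze_zero (fun _ => norm_nonneg _) hzw hε0)
    rw [← truncSeq_eq_self hsteps] at hzw'
    exact tendsto_nhds_unique (hG z) hzw'

end TruncSeq

section Shear

variable {R X : Type*} [Ring R] [TopologicalSpace R] [AddCommGroup X] [Module R X]
  [TopologicalSpace X] [IsTopologicalAddGroup X] [ContinuousSMul R X]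

@[simps]
def Homeomorph.addSMulOfInvariant (f : X → R) (hf : Continuous f) (v : X)
    (hfv : ∀ x (a : R), f (x + a • v) = f x) : X ≃ₜ X where
  toFun x := x + f x • v
  invFun x := x - f x • v
  left_inv x := by simp [hfv]
  right_inv x := by
    have : f (x - f x • v) = f x := by simpa [neg_smul, ← sub_eq_add_neg] using hfv x (-f x)
    simp [this]
  continuous_toFun := continuous_id.add (hf.smul continuous_const)
  continuous_invFun := continuous_id.sub (hf.smul continuous_const)

end Shear

section Coordinates

variable {K X : Type*} [NontriviallyNormedField K] [IsUltrametricDist K] [CompleteSpace K]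
  [AddCommGroup X] [Module K X] [TopologicalSpace X] [IsTopologicalAddGroup X]
  [ContinuousSMul K X]

theorem exists_homeomorph_forall_mem_coord_zero_eq_zero (π : ℕ → X →L[K] K) {e₀ Λ : X}
    (he₀ : π 0 e₀ = 1) (he₀_succ : ∀ j, π (j + 1) e₀ = 0) (hΛ : π 0 Λ = 0)
    (hΛ_succ : ∀ j, π (j + 1) Λ ≠ 0) {T : Set X} {δ : ℕ → ℝ} (hδ : ∀ j, 0 < δ j)
    (hδ0 : Tendsto δ atTop (𝓝 0)) (hT : ∀ x ∈ T, ∀ j, ‖π (j + 1) x‖ ≤ δ j * ‖π (j + 1) Λ‖) :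
    ∃ η : X ≃ₜ X, ∀ x ∈ T, π 0 (η x) = 0 := by
  obtain ⟨G, hG, hGeq⟩ := exists_continuous_eq_of_forall_norm_sub_le (E := K) hδ hδ0
  set g : X → K := fun y => G fun j => π (j + 1) y / π (j + 1) Λ
  have hg : Continuous g :=
    hG.comp (continuous_pi fun j => (π (j + 1)).continuous.div_const _)
  let Φ := Homeomorph.addSMulOfInvariant (π 0) (π 0).continuous Λ (by simp [hΛ])
  let σ := Homeomorph.addSMulOfInvariant (fun y => -g y) hg.neg e₀ (by simp [g, he₀_succ])
  refine ⟨Φ.trans σ, fun x hx => ?_⟩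
  have hgΦ : g (Φ x) = π 0 x := hGeq _ _ fun j => by
    simp only [Φ, Homeomorph.addSMulOfInvariant_apply, map_add, map_smul, smul_eq_mul, add_div,
      mul_div_cancel_right₀ _ (hΛ_succ j), add_sub_cancel_right, norm_div]
    exact div_le_of_le_mul₀ (norm_nonneg _) (hδ j).le (hT x hx j)
  have hΦ0 : π 0 (Φ x) = π 0 x := by simp [Φ, hΛ]
  simp [σ, hgΦ, hΦ0, he₀]

end Coordinates

section Scaling

variable (K : Type*) [NontriviallyNormedField K]

theorem NormedField.exists_norm_le_le_mul_norm :
    ∃ C > 0, ∀ ρ > 0, ∃ a : K, a ≠ 0 ∧ ‖a‖ ≤ ρ ∧ ρ ≤ C * ‖a‖ := by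
  obtain ⟨c, hc⟩ := NormedField.exists_one_lt_norm K
  refine ⟨‖c‖, one_pos.trans hc, fun ρ hρ => ?_⟩
  obtain ⟨a, ha, hlt, hle, -⟩ := rescale_to_shell_semi_normed hc hρ (x := (1 : K)) (by simp)
  simp only [smul_eq_mul, mul_one] at hlt hle
  exact ⟨a, ha, hlt.le, (div_le_iff₀' (one_pos.trans hc)).1 hle⟩

theorem exists_forall_le_mul_norm (r : ℕ → ℝ) :
    ∃ l : ℕ → K, (∀ j, l j ≠ 0) ∧ ∃ δ : ℕ → ℝ, (∀ j, 0 < δ j) ∧ Tendsto δ atTop (𝓝 0) ∧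
      ∀ j, r j ≤ δ j * ‖l j‖ := by
  choose l hl using fun j => NormedField.exists_lt_norm K ((|r j| + 1) * 2 ^ j)
  refine ⟨l, fun j => norm_pos_iff.1 ((by positivity : (0 : ℝ) < _).trans (hl j)),
    fun j => (1 / 2) ^ j, fun j => by positivity,
    tendsto_pow_atTop_nhds_zero_of_lt_one (by norm_num) (by norm_num), fun j => ?_⟩
  calc r j ≤ (|r j| + 1) * 2 ^ j * (1 / 2) ^ j := by
        rw [mul_assoc, ← mul_pow]; norm_num; linarith [le_abs_self (r j)]
    _ ≤ (1 / 2) ^ j * ‖l j‖ := by rw [mul_comm]; gcongr; exact (hl j).le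

theorem exists_tendsto_zero_forall_le_mul_norm {r : ℕ → ℝ} (hr : Tendsto r atTop (𝓝 0)) :
    ∃ l : ℕ → K, (∀ j, l j ≠ 0) ∧ Tendsto l atTop (𝓝 0) ∧ ∃ δ : ℕ → ℝ, (∀ j, 0 < δ j) ∧
      Tendsto δ atTop (𝓝 0) ∧ ∀ j, r j ≤ δ j * ‖l j‖ := by
  obtain ⟨C, hC, hK⟩ := NormedField.exists_norm_le_le_mul_norm K
  set ρ : ℕ → ℝ := fun j => √(|r j| + (1 / 2) ^ j)
  have hρ : ∀ j, 0 < ρ j := fun j => Real.sqrt_pos.2 (by positivity)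
  have hρ0 : Tendsto ρ atTop (𝓝 0) := by
    simpa [ρ] using (hr.abs.add
      (tendsto_pow_atTop_nhds_zero_of_lt_one (by norm_num : (0 : ℝ) ≤ 1 / 2) (by norm_num))).sqrt
  choose l hl0 hlρ hρl using fun j => hK (ρ j) (hρ j)
  refine ⟨l, hl0, ?_, fun j => C * ρ j, fun j => mul_pos hC (hρ j), by simpa using hρ0.const_mul C,
    fun j => ?_⟩
  · exact tendsto_zero_iff_norm_tendsto_zero.2
      (squeeze_zero (fun _ => norm_nonneg _) hlρ hρ0)
  · calc r j ≤ ρ j * ρ j := by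
          rw [Real.mul_self_sqrt (by positivity)]; linarith [le_abs_self (r j), pow_pos
            (by norm_num : (0 : ℝ) < 1 / 2) j]
      _ ≤ ρ j * (C * ‖l j‖) := by gcongr; exact hρl j
      _ = C * ρ j * ‖l j‖ := by ring

end Scaling

namespace ZeroAtInftyContinuousMap

variable {E : Type*} [NormedAddCommGroup E]

def ofTendsto (f : ℕ → E) (hf : Tendsto f atTop (𝓝 0)) : C₀(ℕ, E) where
  toFun := f
  continuous_toFun := continuous_of_discreteTopology
  zero_at_infty' := by rwa [cocompact_eq_cofinite, Nat.cofinite_eq_atTop]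

@[simp]
theorem ofTendsto_apply (f : ℕ → E) (hf : Tendsto f atTop (𝓝 0)) (j : ℕ) :
    ofTendsto f hf j = f j :=
  rfl

theorem norm_apply_le {α : Type*} [TopologicalSpace α] (f : C₀(α, E)) (x : α) : ‖f x‖ ≤ ‖f‖ :=
  norm_toBCF_eq_norm (f := f) ▸ f.toBCF.norm_coe_le_norm x

instance {α : Type*} [TopologicalSpace α] : ContinuousEvalConst C₀(α, E) α E :=
  .of_continuous_forget isometry_toBCF.continuous

variable (𝕜 : Type*) [NormedField 𝕜] [NormedSpace 𝕜 E] {α : Type*} [TopologicalSpace α]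

def evalCLM (x : α) : C₀(α, E) →L[𝕜] E where
  toFun f := f x
  map_add' _ _ := rfl
  map_smul' _ _ := rfl
  cont := continuous_eval_const x

@[simp]
theorem evalCLM_apply (x : α) (f : C₀(α, E)) : evalCLM 𝕜 x f = f x :=
  rfl

end ZeroAtInftyContinuousMap

theorem IsCompact.exists_tendsto_zero_forall_norm_apply_le {E : Type*} [NormedAddCommGroup E]
    {T : Set C₀(ℕ, E)} (hT : IsCompact T) :
    ∃ r : ℕ → ℝ, Tendsto r atTop (𝓝 0) ∧ ∀ j, ∀ x ∈ T, ‖x j‖ ≤ r j := by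
  have hunif : ∀ γ > 0, ∀ᶠ j in atTop, ∀ x ∈ T, ‖x j‖ < γ := by
    intro γ hγ
    have hprod : ∀ᶠ p : ℕ × C₀(ℕ, E) in atTop ×ˢ 𝓝ˢ T, ‖p.2 p.1‖ < γ :=
      hT.mem_prod_nhdsSet_of_forall fun y _ => by
        have hy : ∀ᶠ j in atTop, ‖y j‖ < γ / 2 := by
          have := (zero_at_infty y).norm
          rw [cocompact_eq_cofinite, Nat.cofinite_eq_atTop, norm_zero] at this
          exact this.eventually (gt_mem_nhds (half_pos hγ))
        have hball : ∀ᶠ x in 𝓝 y, ‖x - y‖ < γ / 2 := by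
          filter_upwards [ball_mem_nhds y (half_pos hγ)] with x hx
          rwa [mem_ball, dist_eq_norm] at hx
        filter_upwards [hy.prod_mk hball] with ⟨j, x⟩ ⟨hyj, hxy⟩
        calc ‖x j‖ = ‖(x - y) j + y j‖ := by simp
          _ ≤ ‖x - y‖ + ‖y j‖ := (norm_add_le _ _).trans (by gcongr; exact (x - y).norm_apply_le j)
          _ < γ := by linarith
    exact hprod.curry.mono fun j hj => hj.self_of_nhdsSet
  set r : ℕ → ℝ := fun j => sSup ((fun x : C₀(ℕ, E) => ‖x j‖) '' T)
  have hcont : ∀ j, Continuous fun x : C₀(ℕ, E) => ‖x j‖ := fun j =>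
    (continuous_eval_const j).norm
  have hr0 : ∀ j, 0 ≤ r j := fun j => Real.sSup_nonneg (by rintro _ ⟨x, -, rfl⟩; positivity)
  refine ⟨r, tendsto_order.2 ⟨fun a ha => .of_forall fun j => ha.trans_le (hr0 j),
    fun a ha => ?_⟩, fun j x hx => le_csSup ((hT.image (hcont j)).bddAbove) ⟨x, hx, rfl⟩⟩
  filter_upwards [hunif (a / 2) (half_pos ha)] with j hj
  exact (Real.sSup_le (by rintro _ ⟨x, hx, rfl⟩; exact (hj x hx).le) (half_pos ha).le).trans_lt
    (half_lt_self ha)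

section CompactSets

variable {K : Type*} [NontriviallyNormedField K] [IsUltrametricDist K] [CompleteSpace K]

theorem IsCompact.exists_homeomorph_pi_apply_zero_eq_zero {T : Set (ℕ → K)} (hT : IsCompact T) :
    ∃ η : (ℕ → K) ≃ₜ (ℕ → K), ∀ x ∈ T, η x 0 = 0 := by
  choose r hr using fun j => hT.exists_bound_of_continuousOn (continuous_apply j).continuousOn
  obtain ⟨l, hl, δ, hδ, hδ0, hrl⟩ := exists_forall_le_mul_norm K r
  exact exists_homeomorph_forall_mem_coord_zero_eq_zero
    (fun j => ContinuousLinearMap.proj j) (e₀ := Pi.single 0 1) (Λ := Function.update l 0 0)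
    (by simp) (fun j => by simp) (by simp) (fun j => by simpa using hl (j + 1))
    (fun j => hδ (j + 1)) (hδ0.comp (tendsto_add_atTop_nat 1))
    (fun x hx j => by simpa using (hr (j + 1) x hx).trans (hrl (j + 1)))

theorem IsCompact.exists_homeomorph_zeroAtInfty_apply_zero_eq_zero {T : Set C₀(ℕ, K)}
    (hT : IsCompact T) : ∃ η : C₀(ℕ, K) ≃ₜ C₀(ℕ, K), ∀ x ∈ T, η x 0 = 0 := by
  obtain ⟨r, hr0, hr⟩ := hT.exists_tendsto_zero_forall_norm_apply_le
  obtain ⟨l, hl, hl0, δ, hδ, hδ0, hrl⟩ := exists_tendsto_zero_forall_le_mul_norm K hr0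
  have hΛ : Tendsto (Function.update l 0 0) atTop (𝓝 0) :=
    hl0.congr' (eventually_ne_atTop 0 |>.mono fun j hj => (Function.update_of_ne hj _ _).symm)
  have he₀ : Tendsto (Pi.single 0 1 : ℕ → K) atTop (𝓝 0) :=
    tendsto_const_nhds.congr' (eventually_ne_atTop 0 |>.mono fun j hj => by simp [hj])
  exact exists_homeomorph_forall_mem_coord_zero_eq_zero
    (ZeroAtInftyContinuousMap.evalCLM K) (e₀ := .ofTendsto _ he₀) (Λ := .ofTendsto _ hΛ)
    (by simp) (fun j => by simp) (by simp) (fun j => by simpa using hl (j + 1))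
    (fun j => hδ (j + 1)) (hδ0.comp (tendsto_add_atTop_nat 1))
    (fun x hx j => by simpa using (hr (j + 1) x hx).trans (hrl (j + 1)))

end CompactSets

theorem exists_homeomorph_compact_first_coord_const_general (K : Type*) [NontriviallyNormedField K]
    [IsUltrametricDist K] [CompleteSpace K] :
    (∀ T : Set (ℕ → K), IsCompact T →
      ∃ η : (ℕ → K) ≃ₜ (ℕ → K), ∃ c : K, ∀ x ∈ T, η x 0 = c) ∧
    (∀ T : Set C₀(ℕ, K), IsCompact T →
      ∃ η : C₀(ℕ, K) ≃ₜ C₀(ℕ, K), ∃ c : K, ∀ x ∈ T, η x 0 = c) := by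
  refine ⟨fun T hT => ?_, fun T hT => ?_⟩
  · obtain ⟨η, hη⟩ := hT.exists_homeomorph_pi_apply_zero_eq_zero
    exact ⟨η, 0, hη⟩
  · obtain ⟨η, hη⟩ := hT.exists_homeomorph_zeroAtInfty_apply_zero_eq_zero
    exact ⟨η, 0, hη⟩

/-- Let `K` be a locally compact field with a complete
non-Archimedean multiplicative norm whose value group is nontrivial.  Let `X` be either
`K^ℕ` with the Tychonoff product topology or `c₀(ℕ, K)` with its norm topology, and let
`T` be a compact subset of `X`.  Then there is a homeomorphism `η` of `X` onto itself
such that the first-coordinate projection `π₁` maps `η(T)` to a single point of `K`. -/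
theorem exists_homeomorph_compact_first_coord_const (K : Type*) [NontriviallyNormedField K]
    [IsUltrametricDist K] [CompleteSpace K] [LocallyCompactSpace K] :
    (∀ T : Set (ℕ → K), IsCompact T →
      ∃ η : (ℕ → K) ≃ₜ (ℕ → K), ∃ c : K, ∀ x ∈ T, η x 0 = c) ∧
    (∀ T : Set C₀(ℕ, K), IsCompact T →
      ∃ η : C₀(ℕ, K) ≃ₜ C₀(ℕ, K), ∃ c : K, ∀ x ∈ T, η x 0 = c) :=
  exists_homeomorph_compact_first_coord_const_general K
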